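/- arXiv:1811.01455 — 2 statements merged into one kernel-verified Lean document; each statement's English description precedes it below -/
import Mathlib

section
/- For every k ∈ ℕ with k ≥ 1, every real α and every real x, the k-th matrix power of the generalized Euler matrix satisfies (𝓔^{(α)}(x))^k = 𝓔^{(kα)}(kx); in particular (𝓔(x))^k = 𝓔^{(k)}(kx) and 𝓔^k = 𝓔^{(k)}(0). -/
noncomputable section

/-- `E α x k` is the generalized Euler polynomial `E_k^{(α)}(x)`, characterized by the
generating function `(2/(e^z+1))^α e^{xz} = Σ_k E_k^{(α)}(x) z^k / k!` for `|z| < π`. -/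
def IsGenEulerFamily (E : ℝ → ℝ → ℕ → ℝ) : Prop :=
  ∀ α x z : ℝ, |z| < Real.pi →
    HasSum (fun k : ℕ => E α x k * z ^ k / (Nat.factorial k : ℝ))
      ((2 / (Real.exp z + 1)) ^ α * Real.exp (x * z))

/-- The generalized `(n+1)×(n+1)` Euler matrix `𝓔^{(α)}(x)`, with `(i,j)` entry
`C(i,j) E_{i-j}^{(α)}(x)` (which is `0` for `j > i` since then `C(i,j) = 0`). -/
def genEulerMatrix (E : ℝ → ℝ → ℕ → ℝ) (n : ℕ) (α x : ℝ) :
    Matrix (Fin (n + 1)) (Fin (n + 1)) ℝ :=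
  Matrix.of fun i j => (Nat.choose (i : ℕ) (j : ℕ) : ℝ) * E α x ((i : ℕ) - (j : ℕ))


/-!
The generating function `(2/(e^z+1))^α e^{xz}` is multiplicative in the pair `(α, x)`, so by
the Cauchy product and uniqueness of power-series coefficients `E^{(α+β)}(x+y)` is the binomial
convolution of `E^{(α)}(x)` and `E^{(β)}(y)`. Lower-triangular matrices with entries
`C(i,j) a_{i-j}` multiply by binomial convolution of their sequences, because
`C(i,j) C(j,l) = C(i,l) C(i-l,j-l)`. Hence `𝓔^{(α)}(x) 𝓔^{(β)}(y) = 𝓔^{(α+β)}(x+y)`; since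
`E^{(0)}(0)` is the sequence `1, 0, 0, …`, `𝓔^{(0)}(0)` is the identity, and induction on `k`
concludes.
-/

open Finset Filter Real Asymptotics
open scoped Nat

section BinomialMatrix

variable {R : Type*} [CommSemiring R]

def binomialConvolution (a b : ℕ → R) (m : ℕ) : R :=
  ∑ p ∈ antidiagonal m, (m.choose p.1 : R) * a p.1 * b p.2

def binomialMatrix (n : ℕ) (a : ℕ → R) : Matrix (Fin (n + 1)) (Fin (n + 1)) R :=
  Matrix.of fun i j => ((i : ℕ).choose j : R) * a (i - j)

theorem sum_range_choose_mul_choose_mul (a b : ℕ → R) {i l N : ℕ} (hi : i < N) :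
    ∑ j ∈ range N, (i.choose j : R) * a (i - j) * ((j.choose l : R) * b (j - l)) =
      (i.choose l : R) * binomialConvolution a b (i - l) := by
  rcases lt_or_ge i l with hil | hli
  · rw [Nat.choose_eq_zero_of_lt hil, Nat.cast_zero, zero_mul]
    refine sum_eq_zero fun j _ => ?_
    rcases lt_or_ge i j with hij | hji
    · simp [Nat.choose_eq_zero_of_lt hij]
    · simp [Nat.choose_eq_zero_of_lt (hji.trans_lt hil)]
  obtain ⟨m, rfl⟩ : ∃ m, i = l + m := ⟨i - l, by omega⟩
  have hsub : range (l + (m + 1)) ⊆ range N := range_subset_range.2 (by omega)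
  rw [← sum_subset hsub fun j _ hj => by
      simp [Nat.choose_eq_zero_of_lt (show l + m < j by simp at hj; omega)],
    sum_range_add, sum_eq_zero fun j hj => by
      simp [Nat.choose_eq_zero_of_lt (mem_range.1 hj)],
    zero_add, Nat.add_sub_cancel_left, binomialConvolution,
    ← Nat.sum_antidiagonal_swap, Nat.sum_antidiagonal_eq_sum_range_succ_mk, mul_sum]
  refine sum_congr rfl fun t ht => ?_
  have ht : t ≤ m := Nat.lt_succ_iff.1 (mem_range.1 ht)
  have hchoose : (l + m).choose (l + t) * (l + t).choose l = (l + m).choose l * m.choose t := by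
    rw [Nat.choose_mul (Nat.le_add_right l t)]
    simp
  simp only [Prod.swap_prod_mk, Nat.choose_symm ht, Nat.add_sub_cancel_left,
    show l + m - (l + t) = m - t by omega]
  calc _ = (((l + m).choose (l + t) * (l + t).choose l : ℕ) : R) * (a (m - t) * b t) := by
        push_cast; ring
    _ = _ := by rw [hchoose]; push_cast; ring

theorem binomialMatrix_mul (n : ℕ) (a b : ℕ → R) :
    binomialMatrix n a * binomialMatrix n b = binomialMatrix n (binomialConvolution a b) := by
  ext i l
  simp only [binomialMatrix, Matrix.mul_apply, Matrix.of_apply]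
  rw [Fin.sum_univ_eq_sum_range
    (fun j => ((i : ℕ).choose j : R) * a (i - j) * ((j.choose l : R) * b (j - l)))]
  exact sum_range_choose_mul_choose_mul a b i.isLt

theorem binomialMatrix_single_zero (n : ℕ) : binomialMatrix n (Pi.single 0 1 : ℕ → R) = 1 := by
  ext i j
  simp only [binomialMatrix, Matrix.of_apply, Matrix.one_apply, Pi.single_apply, mul_ite,
    mul_one, mul_zero, Nat.sub_eq_zero_iff_le]
  rcases lt_trichotomy i j with hij | rfl | hji
  · simp [hij.ne, Nat.choose_eq_zero_of_lt (Fin.lt_def.1 hij)]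
  · simp
  · simp [hji.ne', hji.not_ge]

end BinomialMatrix

theorem binomialConvolution_div_factorial {K : Type*} [Field K] [CharZero K] (a b : ℕ → K)
    (m : ℕ) :
    binomialConvolution a b m / m ! = ∑ p ∈ antidiagonal m, a p.1 / p.1 ! * (b p.2 / p.2 !) := by
  rw [binomialConvolution, sum_div]
  refine sum_congr rfl fun p hp => ?_
  have hfac : ∀ k : ℕ, (k ! : K) ≠ 0 := fun k => Nat.cast_ne_zero.2 k.factorial_ne_zero
  rw [← mem_antidiagonal.1 hp, Nat.cast_add_choose]
  field_simp [hfac]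

theorem summable_norm_mul_pow_of_summable {c : ℕ → ℝ} {r z : ℝ}
    (hr : Summable fun n => c n * r ^ n) (hz : |z| < |r|) :
    Summable fun n => ‖c n * z ^ n‖ := by
  have hr0 : r ≠ 0 := by rintro rfl; simp at hz; linarith [abs_nonneg z]
  have hq : |z / r| < 1 := by rw [abs_div]; exact (div_lt_one (by positivity)).2 hz
  have hbdd : (fun n => c n * r ^ n) =O[cofinite] (fun _ => (1 : ℝ)) := by
    rw [Nat.cofinite_eq_atTop]; exact hr.tendsto_atTop_zero.isBigO_one ℝ
  refine summable_of_isBigO (summable_geometric_of_lt_one (abs_nonneg _) hq) ?_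
  have hterm : (fun n => ‖c n * z ^ n‖) = fun n => ‖c n * r ^ n‖ * |z / r| ^ n := by
    funext n
    rw [← abs_pow, ← Real.norm_eq_abs, ← norm_mul, div_pow]
    field_simp
  rw [hterm]
  simpa only [one_mul] using hbdd.norm_left.mul (isBigO_refl (fun n => |z / r| ^ n) _)

theorem eq_of_hasSum_mul_pow {a b : ℕ → ℝ} {r : ℝ} (hr : 0 < r) {F : ℝ → ℝ}
    (ha : ∀ z, |z| < r → HasSum (fun n => a n * z ^ n) (F z))
    (hb : ∀ z, |z| < r → HasSum (fun n => b n * z ^ n) (F z)) : a = b := by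
  have hseries : ∀ c : ℕ → ℝ, (∀ z, |z| < r → HasSum (fun n => c n * z ^ n) (F z)) →
      HasFPowerSeriesAt F (FormalMultilinearSeries.ofScalars ℝ c) 0 := by
    intro c hc
    rw [hasFPowerSeriesAt_iff]
    filter_upwards [Metric.ball_mem_nhds (0 : ℝ) hr] with z hz
    simpa [FormalMultilinearSeries.coeff_ofScalars, mul_comm]
      using hc z (by simpa [Real.dist_eq] using hz)
  have := (hseries a ha).eq_formalMultilinearSeries (hseries b hb)
  rwa [FormalMultilinearSeries.ofScalars_series_eq_iff] at this

namespace IsGenEulerFamily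

variable {E : ℝ → ℝ → ℕ → ℝ}

theorem hasSum_mul_pow (hE : IsGenEulerFamily E) (α x z : ℝ) (hz : |z| < π) :
    HasSum (fun n => E α x n / n ! * z ^ n) ((2 / (exp z + 1)) ^ α * exp (x * z)) := by
  simpa only [div_mul_eq_mul_div] using hE α x z hz

theorem eq_of_hasSum (hE : IsGenEulerFamily E) {α x : ℝ} {c : ℕ → ℝ}
    (hc : ∀ z, |z| < π → HasSum (fun n => c n / n ! * z ^ n)
      ((2 / (exp z + 1)) ^ α * exp (x * z))) : E α x = c := by
  funext n
  have := congrFun (eq_of_hasSum_mul_pow pi_pos (hE.hasSum_mul_pow α x) hc) n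
  rwa [div_left_inj' (Nat.cast_ne_zero.2 n.factorial_ne_zero)] at this

theorem zero_zero_eq_single (hE : IsGenEulerFamily E) : E 0 0 = Pi.single 0 1 := by
  refine hE.eq_of_hasSum fun z _ => ?_
  simp only [rpow_zero, zero_mul, exp_zero, mul_one]
  convert hasSum_single (f := fun n => (Pi.single 0 1 : ℕ → ℝ) n / n ! * z ^ n) 0
    fun n hn => by simp [hn]
  simp

theorem summable_norm_mul_pow (hE : IsGenEulerFamily E) (α x : ℝ) {z : ℝ} (hz : |z| < π) :
    Summable fun n => ‖E α x n / n ! * z ^ n‖ := by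
  obtain ⟨r, hzr, hrπ⟩ := exists_between hz
  have hr : |r| = r := abs_of_pos ((abs_nonneg z).trans_lt hzr)
  exact summable_norm_mul_pow_of_summable
    (hE.hasSum_mul_pow α x r (hr.symm ▸ hrπ)).summable (hr.symm ▸ hzr)

theorem add_add_eq_binomialConvolution (hE : IsGenEulerFamily E) (α β x y : ℝ) :
    E (α + β) (x + y) = binomialConvolution (E α x) (E β y) := by
  refine hE.eq_of_hasSum fun z hz => ?_
  have hf := hE.summable_norm_mul_pow α x hz
  have hg := hE.summable_norm_mul_pow β y hz
  have hprod := (summable_norm_sum_mul_antidiagonal_of_summable_norm hf hg).of_norm.hasSum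
  rw [← tsum_mul_tsum_eq_tsum_sum_antidiagonal_of_summable_norm hf hg,
    (hE.hasSum_mul_pow α x z hz).tsum_eq, (hE.hasSum_mul_pow β y z hz).tsum_eq] at hprod
  have hcoeff : (fun n => binomialConvolution (E α x) (E β y) n / n ! * z ^ n) = fun n =>
      ∑ p ∈ antidiagonal n, E α x p.1 / p.1 ! * z ^ p.1 * (E β y p.2 / p.2 ! * z ^ p.2) := by
    funext n
    rw [binomialConvolution_div_factorial, sum_mul]
    refine sum_congr rfl fun p hp => ?_
    rw [← mem_antidiagonal.1 hp, pow_add]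
    ring
  have hvalue : (2 / (exp z + 1)) ^ (α + β) * exp ((x + y) * z) =
      (2 / (exp z + 1)) ^ α * exp (x * z) * ((2 / (exp z + 1)) ^ β * exp (y * z)) := by
    rw [rpow_add (by positivity), add_mul, exp_add]
    ring
  rwa [hcoeff, hvalue]

end IsGenEulerFamily

theorem genEulerMatrix_eq_binomialMatrix (E : ℝ → ℝ → ℕ → ℝ) (n : ℕ) (α x : ℝ) :
    genEulerMatrix E n α x = binomialMatrix n (E α x) := rfl

theorem genEulerMatrix_mul {E : ℝ → ℝ → ℕ → ℝ} (hE : IsGenEulerFamily E) (n : ℕ)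
    (α β x y : ℝ) :
    genEulerMatrix E n α x * genEulerMatrix E n β y = genEulerMatrix E n (α + β) (x + y) := by
  simp only [genEulerMatrix_eq_binomialMatrix, binomialMatrix_mul,
    hE.add_add_eq_binomialConvolution]

theorem genEulerMatrix_zero_zero {E : ℝ → ℝ → ℕ → ℝ} (hE : IsGenEulerFamily E) (n : ℕ) :
    genEulerMatrix E n 0 0 = 1 := by
  rw [genEulerMatrix_eq_binomialMatrix, hE.zero_zero_eq_single, binomialMatrix_single_zero]

theorem genEulerMatrix_pow {E : ℝ → ℝ → ℕ → ℝ} (hE : IsGenEulerFamily E) (n k : ℕ)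
    (α x : ℝ) :
    genEulerMatrix E n α x ^ k = genEulerMatrix E n (k * α) (k * x) := by
  induction k with
  | zero => simp [genEulerMatrix_zero_zero hE]
  | succ k ih =>
    rw [pow_succ, ih, genEulerMatrix_mul hE]
    push_cast
    congr 1 <;> ring

theorem euler_matrix_pow_general (E : ℝ → ℝ → ℕ → ℝ) (hE : IsGenEulerFamily E)
    (n : ℕ) (k : ℕ) (α x : ℝ) :
    (genEulerMatrix E n α x) ^ k = genEulerMatrix E n ((k : ℝ) * α) ((k : ℝ) * x) ∧
    (genEulerMatrix E n 1 x) ^ k = genEulerMatrix E n (k : ℝ) ((k : ℝ) * x) ∧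
    (genEulerMatrix E n 1 0) ^ k = genEulerMatrix E n (k : ℝ) 0 := by
  refine ⟨genEulerMatrix_pow hE n k α x, ?_, ?_⟩
  · simpa using genEulerMatrix_pow hE n k 1 x
  · simpa using genEulerMatrix_pow hE n k 1 0

theorem euler_matrix_pow (E : ℝ → ℝ → ℕ → ℝ) (hE : IsGenEulerFamily E)
    (n : ℕ) (k : ℕ) (hk : 1 ≤ k) (α x : ℝ) :
    (genEulerMatrix E n α x) ^ k = genEulerMatrix E n ((k : ℝ) * α) ((k : ℝ) * x) ∧
    (genEulerMatrix E n 1 x) ^ k = genEulerMatrix E n (k : ℝ) ((k : ℝ) * x) ∧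
    (genEulerMatrix E n 1 0) ^ k = genEulerMatrix E n (k : ℝ) 0 :=
  euler_matrix_pow_general E hE n k α x
end
end

section
/- For all n, r ∈ ℕ with 0 ≤ r ≤ n, every real α and every real x, one has (−1)^n·C(n,r)·E^{(α)}_{n−r}(x) = (−1)^r·F_{n−r+1} + (−1)^{r+1}·[((r+1)(2x−α) + 2)/2]·F_{n−r} + Σ_{k=r+2}^{n} (−1)^k·C(k,r)·{E^{(α)}_{k−r}(x) + ((k−r)/k)·[E^{(α)}_{k−r−1}(x) − ((k−r−1)/(k−1))·E^{(α)}_{k−r−2}(x)]}·F_{n−k+1}. -/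
/-!
Every sequence `c` satisfies
`c m = c 0 F_{m+1} + (c 1 - c 0) F_m + ∑_{j=2}^m (c j - c (j-1) - c (j-2)) F_{m-j+1}`,
because both sides obey the Fibonacci recursion with forcing term `c (m+2) - c (m+1) - c m`.
For `c k = (-1)^k C(k,r) E_{k-r}^{(α)}(x)` the absorption identity `(k-r)/k · C(k,r) = C(k-1,r)`
turns each forcing term into the summand of the theorem, and the two boundary terms only need
`E_0^{(α)}(x) = 1` and `E_1^{(α)}(x) = x - α/2`, the first two Taylor coefficients of the
generating function at `0`.
-/

noncomputable section

open Finset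
open scoped NNReal

section Fibonacci

variable {R : Type*} [CommRing R]

theorem sum_Icc_mul_fib_add_two (d : ℕ → R) (m : ℕ) :
    ∑ j ∈ Icc 2 (m + 2), d j * Nat.fib (m + 2 - j + 1)
      = ∑ j ∈ Icc 2 (m + 1), d j * Nat.fib (m + 1 - j + 1)
        + ∑ j ∈ Icc 2 m, d j * Nat.fib (m - j + 1) + d (m + 2) := by
  have hlow : ∑ j ∈ Icc 2 (m + 1), d j * Nat.fib (m + 1 - j)
      = ∑ j ∈ Icc 2 m, d j * Nat.fib (m - j + 1) := by
    refine (sum_subset (Icc_subset_Icc_right m.le_succ) fun j hj hjm => ?_).symm.trans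
      (sum_congr rfl fun j hj => ?_)
    · simp only [mem_Icc] at hj hjm
      simp [show j = m + 1 by omega]
    · rw [show m + 1 - j = m - j + 1 by simp only [mem_Icc] at hj; omega]
  rw [sum_Icc_succ_top (by omega), ← hlow, ← sum_add_distrib, Nat.sub_self, Nat.fib_one,
    Nat.cast_one, mul_one]
  congr 1
  refine sum_congr rfl fun j hj => ?_
  rw [show m + 1 + 1 - j + 1 = (m + 1 - j) + 2 by simp only [mem_Icc] at hj; omega,
    Nat.fib_add_two, Nat.cast_add, mul_add, add_comm]

theorem eq_fib_mul_add_sum_Icc_mul_fib (c : ℕ → R) (m : ℕ) :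
    c m = c 0 * Nat.fib (m + 1) + (c 1 - c 0) * Nat.fib m
      + ∑ j ∈ Icc 2 m, (c j - c (j - 1) - c (j - 2)) * Nat.fib (m - j + 1) := by
  induction m using Nat.twoStepInduction with
  | zero => simp
  | one => simp
  | more m ih₀ ih₁ =>
    rw [sum_Icc_mul_fib_add_two, ← sub_eq_iff_eq_add'.mpr ih₀, ← sub_eq_iff_eq_add'.mpr ih₁,
      Nat.fib_add_two (n := m + 1), Nat.fib_add_two (n := m), show m + 2 - 1 = m + 1 from rfl,
      Nat.add_sub_cancel_right]
    push_cast
    ring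

theorem eq_fib_mul_add_sum_Icc_mul_fib_of_le (c : ℕ → R) {r n : ℕ} (hrn : r ≤ n) :
    c n = c r * Nat.fib (n - r + 1) + (c (r + 1) - c r) * Nat.fib (n - r)
      + ∑ k ∈ Icc (r + 2) n, (c k - c (k - 1) - c (k - 2)) * Nat.fib (n - k + 1) := by
  obtain ⟨m, rfl⟩ := Nat.exists_eq_add_of_le hrn
  have hshift : Icc (r + 2) (r + m) = (Icc 2 m).map (addLeftEmbedding r) := by
    rw [map_add_left_Icc]
  have h := eq_fib_mul_add_sum_Icc_mul_fib (fun j => c (r + j)) m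
  rw [add_zero] at h
  rw [h, hshift, sum_map, Nat.add_sub_cancel_left]
  congr 1
  refine sum_congr rfl fun j hj => ?_
  have hj : 2 ≤ j := (mem_Icc.mp hj).1
  simp only [addLeftEmbedding_apply, Nat.add_sub_assoc (by omega : 1 ≤ j),
    Nat.add_sub_assoc hj, Nat.sub_add_eq, Nat.add_sub_cancel_left]

end Fibonacci

section Choose

variable {K : Type*} [Field K] [CharZero K]

theorem Nat.cast_sub_div_mul_choose {k : ℕ} (hk : k ≠ 0) (r : ℕ) :
    ((k : K) - r) / k * k.choose r = (k - 1).choose r := by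
  obtain ⟨n, rfl⟩ := Nat.exists_eq_add_one_of_ne_zero hk
  rcases le_or_gt r (n + 1) with hr | hr
  · have h := congrArg (Nat.cast (R := K)) (Nat.choose_mul_succ_eq n r)
    push_cast [Nat.cast_sub hr] at h
    rw [Nat.add_sub_cancel]
    push_cast
    field_simp
    linear_combination -h
  · simp [Nat.choose_eq_zero_of_lt hr, Nat.choose_eq_zero_of_lt (by omega : n < r)]

theorem neg_one_pow_mul_choose_mul_sub_sub (e : ℕ → K) {r k : ℕ} (hk : r + 2 ≤ k) :
    (-1) ^ k * k.choose r * e (k - r) - (-1) ^ (k - 1) * (k - 1).choose r * e (k - 1 - r)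
        - (-1) ^ (k - 2) * (k - 2).choose r * e (k - 2 - r)
      = (-1) ^ k * k.choose r *
          (e (k - r) + ((k : K) - r) / k *
            (e (k - r - 1) - ((k : K) - r - 1) / ((k : K) - 1) * e (k - r - 2))) := by
  obtain ⟨j, rfl⟩ := Nat.exists_eq_add_of_le' (le_trans (by omega) hk : 2 ≤ k)
  have h₂ := Nat.cast_sub_div_mul_choose (K := K) (k := j + 2) (by omega) r
  have h₁ := Nat.cast_sub_div_mul_choose (K := K) (k := j + 1) (by omega) r
  simp only [Nat.add_sub_cancel, Nat.add_succ_sub_one] at h₁ h₂ ⊢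
  rw [show j + 2 - r - 1 = j + 1 - r by omega, show j + 2 - r - 2 = j - r by omega]
  push_cast at h₁ h₂ ⊢
  linear_combination (-1 : K) ^ j * ((((j : K) + 1 - r) / (j + 1)) * e (j - r) - e (j + 1 - r)) * h₂
    + (-1 : K) ^ j * e (j - r) * h₁

end Choose

theorem hasFPowerSeriesOnBall_ofScalars_of_hasSum {a : ℕ → ℝ} {f : ℝ → ℝ} {r : ℝ≥0}
    (hr : 0 < r) (h : ∀ z : ℝ, |z| ≤ r → HasSum (fun k => a k * z ^ k) (f z)) :
    HasFPowerSeriesOnBall f (FormalMultilinearSeries.ofScalars ℝ a) 0 r where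
  r_le := by
    refine FormalMultilinearSeries.le_radius_of_summable _ ?_
    simpa [FormalMultilinearSeries.ofScalars_norm, abs_mul] using
      (h r (by simp)).summable.abs
  r_pos := by exact_mod_cast hr
  hasSum {y} hy := by
    rw [Metric.mem_eball, edist_zero_right, enorm_eq_nnnorm, ENNReal.coe_lt_coe] at hy
    have hy' : |y| < r := by exact_mod_cast hy
    simpa [FormalMultilinearSeries.ofScalars_apply_eq, mul_comm] using h y hy'.le

def eulerGenFun (α x z : ℝ) : ℝ :=
  (2 / (Real.exp z + 1)) ^ α * Real.exp (x * z)

theorem IsGenEulerFamily.hasFPowerSeriesOnBall {E : ℝ → ℝ → ℕ → ℝ} (hE : IsGenEulerFamily E)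
    (α x : ℝ) :
    HasFPowerSeriesOnBall (eulerGenFun α x)
      (FormalMultilinearSeries.ofScalars ℝ fun k => E α x k / k.factorial) 0 1 :=
  hasFPowerSeriesOnBall_ofScalars_of_hasSum one_pos fun z hz => by
    have hz₁ : |z| ≤ 1 := by exact_mod_cast hz
    simpa [eulerGenFun, div_mul_eq_mul_div] using hE α x z (by linarith [Real.pi_gt_three, hz₁])

theorem hasDerivAt_eulerGenFun_zero (α x : ℝ) : HasDerivAt (eulerGenFun α x) (x - α / 2) 0 := by
  have hbase : HasDerivAt (fun z => 2 / (Real.exp z + 1)) (-(1 / 2)) 0 := by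
    refine ((hasDerivAt_const (0 : ℝ) (2 : ℝ)).div ((Real.hasDerivAt_exp 0).add_const 1)
      (by positivity)).congr_deriv ?_
    norm_num
  have hexp : HasDerivAt (fun z => Real.exp (x * z)) x 0 := by
    simpa using ((hasDerivAt_id (0 : ℝ)).const_mul x).exp
  refine ((hbase.rpow_const (p := α) (Or.inl (by norm_num))).mul hexp).congr_deriv ?_
  norm_num
  ring

theorem IsGenEulerFamily.apply_zero {E : ℝ → ℝ → ℕ → ℝ} (hE : IsGenEulerFamily E) (α x : ℝ) :
    E α x 0 = 1 := by
  have h := (hE.hasFPowerSeriesOnBall α x).coeff_zero fun _ => 0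
  norm_num [eulerGenFun] at h
  exact h

theorem IsGenEulerFamily.apply_one {E : ℝ → ℝ → ℕ → ℝ} (hE : IsGenEulerFamily E) (α x : ℝ) :
    E α x 1 = x - α / 2 := by
  simpa using (hE.hasFPowerSeriesOnBall α x).hasFPowerSeriesAt.hasDerivAt.unique
    (hasDerivAt_eulerGenFun_zero α x)

theorem euler_fibonacci_alternating_identity (E : ℝ → ℝ → ℕ → ℝ)
    (hE : IsGenEulerFamily E) (n r : ℕ) (hrn : r ≤ n) (α x : ℝ) :
    (-1 : ℝ) ^ n * (Nat.choose n r : ℝ) * E α x (n - r)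
      = (-1 : ℝ) ^ r * (Nat.fib (n - r + 1) : ℝ)
        + (-1 : ℝ) ^ (r + 1) * ((((r : ℝ) + 1) * (2 * x - α) + 2) / 2) *
            (Nat.fib (n - r) : ℝ)
        + ∑ k ∈ Finset.Icc (r + 2) n,
            (-1 : ℝ) ^ k * (Nat.choose k r : ℝ) *
              (E α x (k - r)
                + ((k : ℝ) - r) / k *
                  (E α x (k - r - 1)
                    - ((k : ℝ) - r - 1) / ((k : ℝ) - 1) * E α x (k - r - 2))) *
              (Nat.fib (n - k + 1) : ℝ) := by
  set b : ℕ → ℝ := fun k => (-1) ^ k * k.choose r * E α x (k - r)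
  have hb₀ : b r = (-1) ^ r := by simp [b, hE.apply_zero]
  have hb₁ : b (r + 1) - b r = (-1) ^ (r + 1) * ((((r : ℝ) + 1) * (2 * x - α) + 2) / 2) := by
    simp only [b, Nat.add_sub_cancel_left, Nat.sub_self, Nat.choose_succ_self_right,
      Nat.choose_self, hE.apply_zero, hE.apply_one, pow_succ]
    push_cast
    ring
  rw [show (-1 : ℝ) ^ n * n.choose r * E α x (n - r) = b n from rfl,
    eq_fib_mul_add_sum_Icc_mul_fib_of_le b hrn, hb₁, hb₀]
  congr 1
  refine sum_congr rfl fun k hk => congrArg (· * _) ?_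
  exact neg_one_pow_mul_choose_mul_sub_sub (E α x) (mem_Icc.mp hk).1
end
end
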